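/- For every set H ⊆ ℕ, the set D_H = { ā ∈ divs : ∑_{ℓ∈H} a_ℓ < ∞ or ∑_{ℓ∈ℕ\H} a_ℓ < ∞ } is open in (divs, ≤*) (if ā ∈ D_H, b̄ ∈ divs and b̄ ≤* ā, then b̄ ∈ D_H), dense in (divs, ≤*) (for every c̄ ∈ divs there is ā ∈ D_H with ā ≤* c̄), and closed under ≈ (if ā ∈ D_H and b̄ ≈ ā, then b̄ ∈ D_H). -/

import Mathlib

open Filter

/-- `Divs c` says that `c` is a sequence of nonnegative reals converging to `0`
whose series diverges, i.e. `c ∈ divs`. -/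
def Divs (c : ℕ → ℝ) : Prop :=
  (∀ n, 0 ≤ c n) ∧ Tendsto c atTop (nhds 0) ∧
    Tendsto (fun N => ∑ n ∈ Finset.range N, c n) atTop atTop

/-- `LeStar d c` is the eventual dominance relation `d ≤* c`. -/
def LeStar (d c : ℕ → ℝ) : Prop := ∀ᶠ n in atTop, d n ≤ c n

/-- Compatibility in `(divs, ≤*)`: a common lower bound in `divs`. -/
def DivsCompat (c d : ℕ → ℝ) : Prop := ∃ e, Divs e ∧ LeStar e c ∧ LeStar e d

/-- The equivalence `≈` on `divs`: `c ≈ d` iff they are incompatible with the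
same elements of `divs`. -/
def DivsEquiv (c d : ℕ → ℝ) : Prop :=
  ∀ e, Divs e → (DivsCompat e c ↔ DivsCompat e d)

/-- Membership in `D_H = { a ∈ divs : ∑_{ℓ∈H} a_ℓ < ∞ or ∑_{ℓ∈ℕ\H} a_ℓ < ∞ }`. -/
def MemDH (H : Set ℕ) (a : ℕ → ℝ) : Prop :=
  Divs a ∧ (Summable (H.indicator a) ∨ Summable (Hᶜ.indicator a))

/-! Summability of a restriction `S.indicator a` passes down along `≤*`, by comparison.
It also passes along `≈`: if `S.indicator a` is summable but `S.indicator b` is not, then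
`S.indicator b` is an element of `divs` below `b`, and any common lower bound of it and `a` in
`divs` would be dominated by `S.indicator a` on `S` and by `0` off `S`, hence summable.
Density: if `H.indicator c` is not summable, it lies in `divs`, vanishes off `H`, and is `≤* c`. -/

lemma Divs.not_summable {c : ℕ → ℝ} (hc : Divs c) : ¬ Summable c :=
  (summable_iff_not_tendsto_nat_atTop_of_nonneg hc.1).not_left.2 hc.2.2

lemma Divs.indicator_nonneg {c : ℕ → ℝ} (hc : Divs c) (S : Set ℕ) (n : ℕ) :
    0 ≤ S.indicator c n :=
  Set.indicator_nonneg (fun n _ => hc.1 n) n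

lemma Divs.indicator_leStar {c : ℕ → ℝ} (hc : Divs c) (S : Set ℕ) : LeStar (S.indicator c) c :=
  Eventually.of_forall (Set.indicator_le_self' fun n _ => hc.1 n)

lemma Divs.indicator {c : ℕ → ℝ} (hc : Divs c) {S : Set ℕ}
    (hS : ¬ Summable (S.indicator c)) : Divs (S.indicator c) := by
  refine ⟨hc.indicator_nonneg S, ?_, ?_⟩
  · exact squeeze_zero (hc.indicator_nonneg S)
      (Set.indicator_le_self' fun n _ => hc.1 n) hc.2.1
  · exact not_not.1
      ((summable_iff_not_tendsto_nat_atTop_of_nonneg (hc.indicator_nonneg S)).not.1 hS)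

lemma Summable.of_nonneg_of_leStar {f g : ℕ → ℝ} (hg : Summable g) (hf : ∀ n, 0 ≤ f n)
    (hfg : LeStar f g) : Summable f :=
  hg.of_norm_bounded_eventually_nat <| hfg.mono fun n hn => by rwa [Real.norm_of_nonneg (hf n)]

lemma summable_indicator_of_leStar {a b : ℕ → ℝ} {S : Set ℕ} (hb : Divs b) (hba : LeStar b a)
    (ha : Summable (S.indicator a)) : Summable (S.indicator b) :=
  ha.of_nonneg_of_leStar (hb.indicator_nonneg S)
    (hba.mono fun _ hn => Set.indicator_le_indicator hn)

lemma summable_indicator_of_divsEquiv {a b : ℕ → ℝ} {S : Set ℕ} (hb : Divs b)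
    (hba : DivsEquiv b a) (ha : Summable (S.indicator a)) : Summable (S.indicator b) := by
  by_contra hS
  have he : Divs (S.indicator b) := hb.indicator hS
  have hcompat_b : DivsCompat (S.indicator b) b :=
    ⟨S.indicator b, he, Eventually.of_forall fun _ => le_rfl, hb.indicator_leStar S⟩
  obtain ⟨f, hf, hfe, hfa⟩ := (hba _ he).1 hcompat_b
  have hf_le : LeStar f (S.indicator a) := by
    filter_upwards [hfe, hfa] with n hne hna
    by_cases hn : n ∈ S
    · rwa [Set.indicator_of_mem hn]
    · rwa [Set.indicator_of_notMem hn] at hne ⊢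
  exact hf.not_summable (ha.of_nonneg_of_leStar hf.1 hf_le)

lemma exists_memDH_leStar (H : Set ℕ) {c : ℕ → ℝ} (hc : Divs c) : ∃ a, MemDH H a ∧ LeStar a c := by
  by_cases hc' : MemDH H c
  · exact ⟨c, hc', Eventually.of_forall fun _ => le_rfl⟩
  have hH : ¬ Summable (H.indicator c) := fun h => hc' ⟨hc, Or.inl h⟩
  refine ⟨H.indicator c, ⟨hc.indicator hH, Or.inr ?_⟩, hc.indicator_leStar H⟩
  rw [Set.indicator_indicator, Set.compl_inter_self, Set.indicator_empty]
  exact summable_zero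

theorem DH_open_dense_closedEquiv (H : Set ℕ) :
    (∀ a, MemDH H a → ∀ b, Divs b → LeStar b a → MemDH H b) ∧
    (∀ c, Divs c → ∃ a, MemDH H a ∧ LeStar a c) ∧
    (∀ a, MemDH H a → ∀ b, Divs b → DivsEquiv b a → MemDH H b) := by
  refine ⟨?_, fun c hc => exists_memDH_leStar H hc, ?_⟩
  · rintro a ⟨-, ha⟩ b hb hba
    exact ⟨hb, ha.imp (summable_indicator_of_leStar hb hba) (summable_indicator_of_leStar hb hba)⟩
  · rintro a ⟨-, ha⟩ b hb hba
    exact ⟨hb, ha.imp (summable_indicator_of_divsEquiv hb hba)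
      (summable_indicator_of_divsEquiv hb hba)⟩
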